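/- Let N = 2n+1, J = (1/N)L_N, H = (1/N²)(N(M_N−1_N)+1_N), r > 0, C ∈ ℝ. Suppose x : [0,t_f] → ℝ^N and γ : [0,t_f] → ℝ satisfy ẋ = Jx + γHx, rγ̇ = xᵀHx, and ||x(t)||² = rγ(t)² + C for all t. Then γ satisfies the scalar second-order ODE r·γ̈ + r·γ·γ̇ + (n/N²)·γ·(rγ² + C) = 0. -/

import Mathlib

/-- The skew-symmetric circulant payoff matrix of the complete odd circulant game:
first row `(0, -1, 1, -1, 1, …, -1, 1)`, each row a cyclic shift of the previous. -/
noncomputable def Lmat (N : ℕ) : Matrix (Fin N) (Fin N) ℝ :=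
  Matrix.of fun i j => if i = j then 0 else (-1 : ℝ) ^ ((j.val + N - i.val) % N)

/-- The 0-1 circulant tournament matrix: first row has ones exactly at positions
`3, 5, …, N` (1-indexed), i.e. at even nonzero cyclic offsets. -/
noncomputable def Mmat (N : ℕ) : Matrix (Fin N) (Fin N) ℝ :=
  Matrix.of fun i j =>
    if i ≠ j ∧ Even ((j.val + N - i.val) % N) then (1 : ℝ) else 0

/-- The `N × N` all-ones matrix. -/
noncomputable def onesMat (N : ℕ) : Matrix (Fin N) (Fin N) ℝ := Matrix.of fun _ _ => (1 : ℝ)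

/-- `H = (1/N²)(N(M_N − 1_N) + 1_N)`, the Jacobian of the controlled part of the
replicator dynamics at the interior equilibrium. -/
noncomputable def Hmat (N : ℕ) : Matrix (Fin N) (Fin N) ℝ :=
  ((1 : ℝ) / (N : ℝ) ^ 2) • ((N : ℝ) • (Mmat N - onesMat N) + onesMat N)

/-!
Write `N = 2n + 1`, `J = L_N / N` and `M = M_N`. Both `J` and `H` are polynomials in `M` and the
all-ones matrix `𝟙`, which commute since `M` has constant row and column sums `n`; and `J` is
skew-symmetric because `M + Mᵀ = 𝟙 - 1`. Differentiating `rγ̇ = xᵀHx` along `ẋ = (J + γH)x`, the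
`J`-part cancels and `rγ̈ = γ xᵀ(HᵀH + HH)x`. The symmetric part of `HᵀH + HH + H` is
`-(n/N²)·1`, so `xᵀ(HᵀH + HH)x = -(n/N²)‖x‖² - rγ̇`, and the conservation law
`‖x‖² = rγ² + C` gives the equation.
-/

open Matrix

section QuadraticForm

variable {ι : Type*} [Fintype ι]

theorem HasDerivAt.dotProduct {f g : ℝ → ι → ℝ} {f' g' : ι → ℝ} {t : ℝ}
    (hf : HasDerivAt f f' t) (hg : HasDerivAt g g' t) :
    HasDerivAt (fun s => f s ⬝ᵥ g s) (f' ⬝ᵥ g t + f t ⬝ᵥ g') t := by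
  simp only [_root_.dotProduct, ← Finset.sum_add_distrib]
  exact HasDerivAt.fun_sum fun i _ => (hasDerivAt_pi.1 hf i).mul (hasDerivAt_pi.1 hg i)

theorem HasDerivAt.const_mulVec (A : Matrix ι ι ℝ) {f : ℝ → ι → ℝ} {f' : ι → ℝ} {t : ℝ}
    (hf : HasDerivAt f f' t) : HasDerivAt (fun s => A *ᵥ f s) (A *ᵥ f') t :=
  (Matrix.mulVecLin A).toContinuousLinearMap.hasFDerivAt.comp_hasDerivAt t hf

theorem mulVec_dotProduct_mulVec (A B : Matrix ι ι ℝ) (x : ι → ℝ) :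
    A *ᵥ x ⬝ᵥ B *ᵥ x = x ⬝ᵥ (Aᵀ * B) *ᵥ x := by
  rw [← mulVec_mulVec, dotProduct_mulVec x, vecMul_transpose]

theorem dotProduct_mulVec_self_of_add_transpose_eq [DecidableEq ι] {S : Matrix ι ι ℝ} {c : ℝ}
    (hS : S + Sᵀ = c • 1) (x : ι → ℝ) : x ⬝ᵥ S *ᵥ x = c / 2 * (x ⬝ᵥ x) := by
  have h := congrArg (fun A => x ⬝ᵥ A *ᵥ x) hS
  simp only [add_mulVec, dotProduct_add, dotProduct_transpose_mulVec, smul_mulVec, one_mulVec,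
    dotProduct_smul, smul_eq_mul] at h
  linarith

/-- The `J`-part drops out because `Jᵀ H + H J = H J - J H = 0`. -/
theorem hasDerivAt_dotProduct_mulVec_of_skew_of_commute {J H : Matrix ι ι ℝ}
    (hJ : Jᵀ = -J) (hJH : Commute J H) {x : ℝ → ι → ℝ} {g t : ℝ}
    (hx : HasDerivAt x (J *ᵥ x t + g • H *ᵥ x t) t) :
    HasDerivAt (fun s => x s ⬝ᵥ H *ᵥ x s) (g * (x t ⬝ᵥ (Hᵀ * H + H * H) *ᵥ x t)) t := by
  convert hx.dotProduct (hx.const_mulVec H) using 1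
  simp only [mulVec_add, mulVec_smul, add_dotProduct, dotProduct_add, smul_dotProduct,
    dotProduct_smul, smul_eq_mul, mulVec_dotProduct_mulVec, mulVec_mulVec, hJ, neg_mul,
    neg_mulVec, dotProduct_neg, hJH.eq, add_mulVec]
  ring

end QuadraticForm

section Circulant

variable {N : ℕ}

theorem Mmat_apply [NeZero N] (i j : Fin N) :
    Mmat N i j = if j - i ≠ 0 ∧ Even (j - i).val then 1 else 0 := by
  have hoffset : (j.val + N - i.val) % N = (j - i).val := by
    rw [Fin.val_sub]; congr 1; omega
  simp only [Mmat, of_apply, hoffset, ne_eq, sub_eq_zero, eq_comm (a := j)]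

theorem Lmat_eq : Lmat N = (2 : ℝ) • Mmat N - onesMat N + 1 := by
  ext i j
  simp only [Lmat, Mmat, onesMat, Matrix.add_apply, Matrix.sub_apply, Matrix.smul_apply,
    one_apply, of_apply, smul_eq_mul]
  by_cases hij : i = j
  · simp [hij]
  · rcases Nat.even_or_odd ((j.val + N - i.val) % N) with he | ho
    · simp [hij, he, he.neg_one_pow]; norm_num
    · simp [hij, ho.neg_one_pow, Nat.not_even_iff_odd.2 ho]

theorem transpose_onesMat : (onesMat N)ᵀ = onesMat N := rfl

theorem onesMat_mul_onesMat : onesMat N * onesMat N = (N : ℝ) • onesMat N := by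
  ext i j
  simp [onesMat, mul_apply]

theorem Hmat_eq [NeZero N] :
    Hmat N = (1 / N : ℝ) • Mmat N - (((N : ℝ) - 1) / (N : ℝ) ^ 2) • onesMat N := by
  have hN : (N : ℝ) ≠ 0 := NeZero.ne _
  rw [Hmat]
  match_scalars <;> field_simp
  ring

end Circulant

section OddCirculant

variable (n : ℕ)

theorem sum_range_ite_ne_zero_even :
    ∑ d ∈ Finset.range (2 * n + 1), (if d ≠ 0 ∧ Even d then (1 : ℝ) else 0) = n := by
  induction n with
  | zero => simp
  | succ m ih =>
    rw [show 2 * (m + 1) + 1 = 2 * m + 1 + 1 + 1 by ring, Finset.sum_range_succ,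
      Finset.sum_range_succ, ih]
    have hodd : ¬ Even (2 * m + 1) := Nat.not_even_iff_odd.2 (odd_two_mul_add_one m)
    have heven : Even (2 * m + 1 + 1) := ⟨m + 1, by ring⟩
    simp [hodd, heven]

theorem sum_Mmat_row (i : Fin (2 * n + 1)) : ∑ j, Mmat (2 * n + 1) i j = n :=
  calc ∑ j, Mmat (2 * n + 1) i j
      = ∑ d : Fin (2 * n + 1), if d ≠ 0 ∧ Even d.val then (1 : ℝ) else 0 := by
        simp only [Mmat_apply]
        exact Fintype.sum_equiv (Equiv.subRight i) _ _ fun _ => rfl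
    _ = ∑ d ∈ Finset.range (2 * n + 1), if d ≠ 0 ∧ Even d then (1 : ℝ) else 0 := by
        rw [← Fin.sum_univ_eq_sum_range]
        simp only [ne_eq, Fin.ext_iff, Fin.val_zero]
    _ = n := sum_range_ite_ne_zero_even n

theorem transpose_Mmat :
    (Mmat (2 * n + 1))ᵀ = onesMat (2 * n + 1) - 1 - Mmat (2 * n + 1) := by
  ext i j
  simp only [transpose_apply, onesMat, Matrix.sub_apply, one_apply, of_apply, Mmat_apply]
  rw [← neg_sub j i]
  simp only [neg_ne_zero, Fin.val_neg]
  by_cases hij : j - i = 0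
  · simp [(sub_eq_zero.1 hij).symm]
  · have hlt := (j - i).isLt
    have hodd : ¬ Even (2 * n + 1) := Nat.not_even_iff_odd.2 (odd_two_mul_add_one n)
    have hparity : Even (2 * n + 1 - (j - i).val) ↔ ¬ Even (j - i).val := by
      rw [Nat.even_sub hlt.le]; tauto
    have hne : i ≠ j := by rintro rfl; simp at hij
    by_cases he : Even (j - i).val <;> simp [hij, hne, hparity, he]

theorem Mmat_mul_onesMat :
    Mmat (2 * n + 1) * onesMat (2 * n + 1) = (n : ℝ) • onesMat (2 * n + 1) := by
  ext i j
  simp [mul_apply, onesMat, sum_Mmat_row]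

theorem onesMat_mul_Mmat :
    onesMat (2 * n + 1) * Mmat (2 * n + 1) = (n : ℝ) • onesMat (2 * n + 1) := by
  rw [← transpose_onesMat, ← transpose_transpose (Mmat _), ← transpose_mul, transpose_Mmat,
    Matrix.sub_mul, Matrix.sub_mul, onesMat_mul_onesMat, Matrix.one_mul, Mmat_mul_onesMat,
    transpose_sub, transpose_sub, transpose_smul, transpose_smul, transpose_onesMat]
  push_cast
  module

theorem transpose_Lmat : (Lmat (2 * n + 1))ᵀ = -Lmat (2 * n + 1) := by
  rw [Lmat_eq]
  simp only [transpose_add, transpose_sub, transpose_smul, transpose_one, transpose_onesMat,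
    transpose_Mmat]
  module

theorem commute_Lmat_Hmat : Commute (Lmat (2 * n + 1)) (Hmat (2 * n + 1)) := by
  rw [Lmat_eq, Hmat_eq, commute_iff_eq]
  simp only [Matrix.sub_mul, Matrix.mul_sub, Matrix.add_mul, Matrix.mul_add, smul_mul_assoc,
    mul_smul_comm, Matrix.one_mul, Matrix.mul_one, Mmat_mul_onesMat, onesMat_mul_Mmat]
  module

theorem Hmat_add_transpose :
    Hmat (2 * n + 1) + (Hmat (2 * n + 1))ᵀ
      = ((1 - 2 * n) / (2 * n + 1 : ℝ) ^ 2) • onesMat (2 * n + 1)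
        - (1 / (2 * n + 1 : ℝ)) • 1 := by
  have hN : (2 * n + 1 : ℝ) ≠ 0 := by positivity
  rw [Hmat_eq]
  simp only [transpose_sub, transpose_smul, transpose_onesMat, transpose_Mmat]
  push_cast
  match_scalars <;> field_simp <;> ring

theorem onesMat_mul_Hmat :
    onesMat (2 * n + 1) * Hmat (2 * n + 1) = (-(n / (2 * n + 1 : ℝ))) • onesMat (2 * n + 1) := by
  have hN : (2 * n + 1 : ℝ) ≠ 0 := by positivity
  rw [Hmat_eq, Matrix.mul_sub, mul_smul_comm, mul_smul_comm, onesMat_mul_Mmat, onesMat_mul_onesMat]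
  push_cast
  match_scalars
  field_simp
  ring

/-- `(Hᵀ + H) H + H` is a combination of `H` and the all-ones matrix, so its symmetric part
is a multiple of the identity. -/
theorem dotProduct_Hmat_quadratic (x : Fin (2 * n + 1) → ℝ) :
    x ⬝ᵥ ((Hmat (2 * n + 1))ᵀ * Hmat (2 * n + 1) + Hmat (2 * n + 1) * Hmat (2 * n + 1)
      + Hmat (2 * n + 1)) *ᵥ x = -(n / (2 * n + 1 : ℝ) ^ 2) * (x ⬝ᵥ x) := by
  set H := Hmat (2 * n + 1)
  have hN : (2 * n + 1 : ℝ) ≠ 0 := by positivity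
  have hS : Hᵀ * H + H * H + H = (2 * n / (2 * n + 1 : ℝ)) • H
      + (n * (2 * n - 1) / (2 * n + 1 : ℝ) ^ 3) • onesMat (2 * n + 1) := by
    rw [← add_mul, add_comm Hᵀ, Hmat_add_transpose, Matrix.sub_mul, smul_mul_assoc,
      smul_mul_assoc, onesMat_mul_Hmat, Matrix.one_mul]
    match_scalars <;> field_simp <;> ring
  rw [dotProduct_mulVec_self_of_add_transpose_eq (c := -(2 * n / (2 * n + 1 : ℝ) ^ 2))]
  · ring
  rw [hS, transpose_add, transpose_smul, transpose_smul, transpose_onesMat,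
    eq_sub_of_add_eq' (Hmat_add_transpose n)]
  match_scalars <;> field_simp <;> ring

end OddCirculant

theorem stmt_18_general (n : ℕ) (r C : ℝ) (hr : 0 < r)
    (x : ℝ → Fin (2 * n + 1) → ℝ) (γ γ' : ℝ → ℝ)
    (hx : ∀ t, HasDerivAt x
      ((((1 : ℝ) / (2 * n + 1 : ℝ)) • Lmat (2 * n + 1)).mulVec (x t)
        + γ t • (Hmat (2 * n + 1)).mulVec (x t)) t)
    (hγ' : ∀ t, r * γ' t = dotProduct (x t) ((Hmat (2 * n + 1)).mulVec (x t)))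
    (hconserve : ∀ t, ∑ i, x t i ^ 2 = r * γ t ^ 2 + C) :
    ∀ t, HasDerivAt γ'
      ((-(r * γ t * γ' t)
        - ((n : ℝ) / (2 * n + 1 : ℝ) ^ 2) * γ t * (r * γ t ^ 2 + C)) / r) t := by
  intro t
  have hJ : (((1 : ℝ) / (2 * n + 1 : ℝ)) • Lmat (2 * n + 1))ᵀ
      = -(((1 : ℝ) / (2 * n + 1 : ℝ)) • Lmat (2 * n + 1)) := by
    rw [transpose_smul, transpose_Lmat, smul_neg]
  have hquad := (hasDerivAt_dotProduct_mulVec_of_skew_of_commute hJ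
    ((commute_Lmat_Hmat n).smul_left _) (hx t)).div_const r
  have hQ := dotProduct_Hmat_quadratic n (x t)
  set H := Hmat (2 * n + 1)
  have hnorm : x t ⬝ᵥ x t = r * γ t ^ 2 + C := by
    rw [← hconserve t]; simp only [dotProduct, sq]
  have hHH : x t ⬝ᵥ (Hᵀ * H + H * H) *ᵥ x t
      = -(n / (2 * n + 1 : ℝ) ^ 2) * (r * γ t ^ 2 + C) - r * γ' t := by
    rw [← hnorm, hγ' t, ← hQ]
    simp only [add_mulVec, dotProduct_add]
    ring
  have hγ'_eq : (fun s => x s ⬝ᵥ H *ᵥ x s / r) = γ' := by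
    funext s
    rw [div_eq_iff hr.ne', ← hγ' s, mul_comm]
  rw [hγ'_eq, hHH] at hquad
  exact hquad.congr_deriv (by ring)

/-- For the quasi-linearized control of the complete odd circulant game
(`J = (1/N)L_N`, `H` as above), if `ẋ = Jx + γHx`, `rγ̇ = xᵀHx` and
`‖x(t)‖² = rγ(t)² + C` for all `t`, then the open-loop optimal control satisfies
`rγ̈ + rγγ̇ + (n/N²)γ(rγ² + C) = 0`. -/
theorem stmt_18 (n : ℕ) (hn : 1 ≤ n) (r C : ℝ) (hr : 0 < r)
    (x : ℝ → Fin (2 * n + 1) → ℝ) (γ γ' : ℝ → ℝ)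
    (hx : ∀ t, HasDerivAt x
      ((((1 : ℝ) / (2 * n + 1 : ℝ)) • Lmat (2 * n + 1)).mulVec (x t)
        + γ t • (Hmat (2 * n + 1)).mulVec (x t)) t)
    (hγ : ∀ t, HasDerivAt γ (γ' t) t)
    (hγ' : ∀ t, r * γ' t = dotProduct (x t) ((Hmat (2 * n + 1)).mulVec (x t)))
    (hconserve : ∀ t, ∑ i, x t i ^ 2 = r * γ t ^ 2 + C) :
    ∀ t, HasDerivAt γ'
      ((-(r * γ t * γ' t)
        - ((n : ℝ) / (2 * n + 1 : ℝ) ^ 2) * γ t * (r * γ t ^ 2 + C)) / r) t :=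
  stmt_18_general n r C hr x γ γ' hx hγ' hconserve
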